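/- arXiv:1208.3915 — 2 statements merged into one kernel-verified Lean document; each statement's English description precedes it below -/
import Mathlib

section
/- For n ≥ 2 and k ≥ 1, the number of triangulations of a convex 2n-gon with vertices 0, ..., 2n-1 containing exactly k diagonals {x,y} with x+y ≡ 1 (mod 2n) equals ∑ over compositions (i_1,...,i_{k+1}) of n-1 into k+1 positive parts of 2^{k+1} * C_{2i_1-1} * ... * C_{2i_{k+1}-1}, where C_m denotes the m-th Catalan number. -/
/-- `e` is a diagonal of a convex `m`-gon with vertices `0, …, m-1`:
an ordered pair `(a, b)` with `a < b < m` joining two non-adjacent vertices. -/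
def IsPolygonDiagonal (m : ℕ) (e : ℕ × ℕ) : Prop :=
  e.1 < e.2 ∧ e.2 < m ∧ e.1 + 2 ≤ e.2 ∧ ¬(e.1 = 0 ∧ e.2 = m - 1)

/-- Two diagonals (each given as an increasing pair) of a convex polygon cross
in their interiors. -/
def DiagonalsCross (e f : ℕ × ℕ) : Prop :=
  (e.1 < f.1 ∧ f.1 < e.2 ∧ e.2 < f.2) ∨ (f.1 < e.1 ∧ e.1 < f.2 ∧ f.2 < e.2)

/-- A triangulation of a convex `m`-gon: a (maximal) set of `m - 3` pairwise
non-crossing diagonals. -/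
def IsTriangulation (m : ℕ) (T : Finset (ℕ × ℕ)) : Prop :=
  (∀ e ∈ T, IsPolygonDiagonal m e) ∧
  (∀ e ∈ T, ∀ f ∈ T, ¬ DiagonalsCross e f) ∧
  T.card = m - 3

/-!
Reflecting the polygon by `v ↦ -v` turns the diagonals with `x + y ≡ 1 (mod 2n)` into the nested
chain of diagonals `(j + 1, 2n - 2 - j)` parallel to the side `{2n - 1, 0}`. Cutting a
triangulation along its chain diagonal nearest to that side leaves a `(2j + 4)`-gon without chain
diagonals and a `2(n - j - 1)`-gon carrying the others, so the count is a sum over compositions of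
`n - 1` of products of the numbers `a_i` of triangulations of the `(2i + 2)`-gon without chain
diagonals. Cutting all triangulations of the `(2i + 2)`-gon in the same way gives
`C_{2i} = a_i + ∑_{0 < j < i} C_{2i-2j} a_j`, and as the terms of the Catalan recursion for `C_{2i}`
with odd and with even first index have the same sum, `a_i = 2 C_{2i-1}`. That the `m`-gon has
`C_{m-2}` triangulations follows from the same cutting, along the diagonals from its last vertex.
-/

open Finset

theorem Finset.card_eq_card_filter_add_sum_card_filter_least {α : Type*} (s : Finset α)
    (p : ℕ → α → Prop) [∀ i, DecidablePred (p i)] (I : Finset ℕ)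
    (hI : ∀ x ∈ s, ∀ i, p i x → i ∈ I) :
    #s = #(s.filter fun x => ∀ i ∈ I, ¬ p i x) +
      ∑ c ∈ I, #(s.filter fun x => p c x ∧ ∀ i < c, ¬ p i x) := by
  classical
  rw [← card_filter_add_card_filter_not (s := s) (fun x => ∀ i ∈ I, ¬ p i x), ← card_biUnion]
  · congr 2
    ext x
    simp only [mem_filter, mem_biUnion, not_forall, not_not]
    constructor
    · rintro ⟨hx, i, -, hpi⟩
      have hex : ∃ i, p i x := ⟨i, hpi⟩
      exact ⟨Nat.find hex, hI x hx _ (Nat.find_spec hex), hx, Nat.find_spec hex,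
        fun j hj => Nat.find_min hex hj⟩
    · rintro ⟨c, hc, hx, hpc, -⟩
      exact ⟨hx, c, hc, hpc⟩
  · intro c _ c' _ hne
    simp only [Function.onFun, disjoint_left, mem_filter]
    rintro x ⟨-, hc, hlt⟩ ⟨-, hc', hlt'⟩
    rcases Nat.lt_or_gt_of_ne hne with h | h
    exacts [hlt' c h hc, hlt c' h hc']

theorem Finset.sum_range_two_mul {M : Type*} [AddCommMonoid M] (f : ℕ → M) (n : ℕ) :
    ∑ k ∈ range (2 * n), f k = ∑ j ∈ range n, (f (2 * j) + f (2 * j + 1)) := by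
  induction n with
  | zero => simp
  | succ n ih =>
    rw [mul_add, mul_one, sum_range_succ, sum_range_succ, sum_range_succ, ih, add_assoc]

/-- In the recursion for `catalan (2 * n + 2)`, the terms with even first index have the same sum
as those with odd first index. -/
theorem catalan_two_mul_add_two (n : ℕ) :
    catalan (2 * n + 2) = 2 * ∑ j ∈ range (n + 1), catalan (2 * j + 1) * catalan (2 * (n - j)) := by
  rw [catalan_succ, Fin.sum_univ_eq_sum_range (fun i => catalan i * catalan (2 * n + 1 - i)),
    Nat.succ_eq_add_one, show 2 * n + 1 + 1 = 2 * (n + 1) by ring, sum_range_two_mul,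
    sum_add_distrib]
  have heven : ∑ j ∈ range (n + 1), catalan (2 * j) * catalan (2 * n + 1 - 2 * j) =
      ∑ j ∈ range (n + 1), catalan (2 * j + 1) * catalan (2 * (n - j)) := by
    rw [← sum_range_reflect]
    refine sum_congr rfl fun j hj => ?_
    rw [mem_range] at hj
    rw [mul_comm, show 2 * n + 1 - 2 * (n + 1 - 1 - j) = 2 * j + 1 by omega,
      show n + 1 - 1 - j = n - j by omega]
  have hodd : ∑ j ∈ range (n + 1), catalan (2 * j + 1) * catalan (2 * n + 1 - (2 * j + 1)) =
      ∑ j ∈ range (n + 1), catalan (2 * j + 1) * catalan (2 * (n - j)) :=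
    sum_congr rfl fun j hj => by rw [show 2 * n + 1 - (2 * j + 1) = 2 * (n - j) by omega]
  rw [heven, hodd, two_mul]

namespace Composition

def dropHead {n : ℕ} (c : Composition n) : Composition (n - c.blocks.headI) where
  blocks := c.blocks.tail
  blocks_pos hi := c.blocks_pos (List.mem_of_mem_tail hi)
  blocks_sum := by
    have hc := c.blocks_sum
    cases h : c.blocks with
    | nil => simp_all
    | cons b l => rw [h, List.sum_cons] at hc; simp [← hc]

lemma length_dropHead {n : ℕ} (c : Composition n) : c.dropHead.length = c.length - 1 :=
  List.length_tail

lemma headI_pos {n : ℕ} (c : Composition n) (hc : c.length ≠ 0) : 0 < c.blocks.headI := by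
  obtain ⟨b, l, hb⟩ := List.exists_cons_of_length_pos (Nat.pos_of_ne_zero hc)
  rw [hb, List.headI_cons]
  exact c.blocks_pos (hb ▸ List.mem_cons_self)

lemma headI_lt {n : ℕ} (c : Composition n) (hc : 2 ≤ c.length) : c.blocks.headI < n := by
  have hsum := c.blocks_sum
  have hlen := c.blocks_length
  rcases hb : c.blocks with _ | ⟨b, _ | ⟨b', l⟩⟩
  all_goals simp only [hb, List.length_cons, List.length_nil, List.sum_cons] at hsum hlen
  · omega
  · omega
  have := c.blocks_pos (hb ▸ List.mem_cons_of_mem _ List.mem_cons_self)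
  rw [List.headI_cons]
  omega

theorem sum_prod_map_blocks_length_add_two {R : Type*} [CommSemiring R] (f : ℕ → R) (n k : ℕ) :
    ∑ c ∈ univ.filter (fun c : Composition n => c.length = k + 2), (c.blocks.map f).prod =
      ∑ j ∈ range (n - 1), f (j + 1) *
        ∑ c ∈ univ.filter (fun c : Composition (n - (j + 1)) => c.length = k + 1),
          (c.blocks.map f).prod := by
  simp_rw [mul_sum]
  rw [sum_sigma']
  symm
  refine sum_bij' (fun p hp => ⟨(p.1 + 1) :: p.2.blocks, ?_, ?_⟩)
    (fun c hc => ⟨c.blocks.headI - 1, c.dropHead.cast ?_⟩) ?_ ?_ (fun _ _ => rfl) ?_ ?_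
  · intro i hi
    rcases List.mem_cons.1 hi with rfl | hi
    exacts [Nat.succ_pos _, p.2.blocks_pos hi]
  · simp only [mem_sigma, mem_range] at hp
    rw [List.sum_cons, p.2.blocks_sum]
    omega
  · have := c.headI_pos (by rw [(mem_filter.1 hc).2]; omega)
    omega
  · rintro p hp
    simp only [mem_sigma, mem_filter, mem_univ, true_and] at hp ⊢
    change ((p.1 + 1) :: p.2.blocks).length = k + 2
    rw [List.length_cons, p.2.blocks_length, hp.2]
  · rintro c hc
    simp only [mem_sigma, mem_range, mem_filter, mem_univ, true_and] at hc ⊢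
    have := c.headI_lt (by rw [hc]; omega)
    have := c.headI_pos (by rw [hc]; omega)
    exact ⟨by omega, (length_dropHead c).trans (by rw [hc]; rfl)⟩
  · rintro c hc
    have := c.headI_pos (by rw [(mem_filter.1 hc).2]; omega)
    ext1
    change (c.blocks.headI - 1 + 1) :: c.blocks.tail = c.blocks
    rw [Nat.sub_add_cancel this]
    cases hb : c.blocks
    · simp [hb] at this
    · rfl
  · intro p _
    rw [← List.prod_cons, ← List.map_cons]

end Composition

namespace Triangulation

lemma diagonalsCross_comm {e f : ℕ × ℕ} : DiagonalsCross e f ↔ DiagonalsCross f e := by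
  unfold DiagonalsCross; tauto

instance (m : ℕ) : DecidablePred (IsPolygonDiagonal m) := fun _ => by
  unfold IsPolygonDiagonal; infer_instance

instance : DecidableRel DiagonalsCross := fun _ _ => by
  unfold DiagonalsCross; infer_instance

instance (m : ℕ) : DecidablePred (IsTriangulation m) := fun _ => by
  unfold IsTriangulation; infer_instance

def diagonals (m : ℕ) : Finset (ℕ × ℕ) :=
  (range m ×ˢ range m).filter (IsPolygonDiagonal m)

lemma mem_diagonals {m : ℕ} {e : ℕ × ℕ} : e ∈ diagonals m ↔ IsPolygonDiagonal m e := by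
  simp only [diagonals, mem_filter, mem_product, mem_range, and_iff_right_iff_imp]
  rintro ⟨h1, h2, -⟩
  omega

def IsNoncrossing (m : ℕ) (T : Finset (ℕ × ℕ)) : Prop :=
  (∀ e ∈ T, IsPolygonDiagonal m e) ∧ ∀ e ∈ T, ∀ f ∈ T, ¬ DiagonalsCross e f

lemma isTriangulation_iff {m : ℕ} {T : Finset (ℕ × ℕ)} :
    IsTriangulation m T ↔ IsNoncrossing m T ∧ T.card = m - 3 :=
  and_assoc.symm

-- The inner polygon of the diagonal `(a, b)` has the vertices `a, …, b`, the outer one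
-- `b, …, m - 1, 0, …, a`, both numbered from `0`.

def shiftEdge (a : ℕ) (e : ℕ × ℕ) : ℕ × ℕ := (e.1 + a, e.2 + a)

/-- Vertex `z` of the outer polygon is vertex `(z + b) mod m` of the `m`-gon. -/
def wrapEdge (m b : ℕ) (e : ℕ × ℕ) : ℕ × ℕ :=
  if e.2 + b < m then (e.1 + b, e.2 + b)
  else if e.1 + b < m then (e.2 + b - m, e.1 + b)
  else (e.1 + b - m, e.2 + b - m)

def innerPart (a b : ℕ) (T : Finset (ℕ × ℕ)) : Finset (ℕ × ℕ) :=
  (diagonals (b - a + 1)).filter fun e => shiftEdge a e ∈ T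

def outerPart (m a b : ℕ) (T : Finset (ℕ × ℕ)) : Finset (ℕ × ℕ) :=
  (diagonals (m - b + a + 1)).filter fun e => wrapEdge m b e ∈ T

def glue (m a b : ℕ) (T₁ T₂ : Finset (ℕ × ℕ)) : Finset (ℕ × ℕ) :=
  insert (a, b) (T₁.image (shiftEdge a) ∪ T₂.image (wrapEdge m b))

section Split

variable {m a b : ℕ} {T T₁ T₂ : Finset (ℕ × ℕ)}

lemma shiftEdge_injective : Function.Injective (shiftEdge a) := by
  rintro ⟨x, y⟩ ⟨u, w⟩ h
  simp only [shiftEdge, Prod.mk.injEq] at h ⊢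
  omega

lemma diagonalsCross_shiftEdge {e f : ℕ × ℕ} :
    DiagonalsCross (shiftEdge a e) (shiftEdge a f) ↔ DiagonalsCross e f := by
  simp only [DiagonalsCross, shiftEdge]
  omega

lemma mem_glue {e : ℕ × ℕ} : e ∈ glue m a b T₁ T₂ ↔
    e = (a, b) ∨ (∃ f ∈ T₁, shiftEdge a f = e) ∨ ∃ f ∈ T₂, wrapEdge m b f = e := by
  simp only [glue, mem_insert, mem_union, mem_image]

lemma IsNoncrossing.innerPart (hT : IsNoncrossing m T) :
    IsNoncrossing (b - a + 1) (innerPart a b T) := by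
  simp only [Triangulation.innerPart, IsNoncrossing, mem_filter, mem_diagonals]
  exact ⟨fun e he => he.1, fun e he f hf =>
    diagonalsCross_shiftEdge.not.1 (hT.2 _ he.2 _ hf.2)⟩

lemma not_diagonalsCross_shiftEdge {e : ℕ × ℕ} (he : IsPolygonDiagonal (b - a + 1) e) :
    ¬ DiagonalsCross (shiftEdge a e) (a, b) := by
  simp only [IsPolygonDiagonal, DiagonalsCross, shiftEdge] at *
  omega

lemma shiftEdge_ne {e : ℕ × ℕ} (he : IsPolygonDiagonal (b - a + 1) e) : shiftEdge a e ≠ (a, b) := by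
  simp only [IsPolygonDiagonal, shiftEdge, ne_eq, Prod.mk.injEq] at *
  omega

variable (hd : IsPolygonDiagonal m (a, b))
include hd

lemma isPolygonDiagonal_shiftEdge {e : ℕ × ℕ} (he : IsPolygonDiagonal (b - a + 1) e) :
    IsPolygonDiagonal m (shiftEdge a e) := by
  simp only [IsPolygonDiagonal, shiftEdge] at *
  omega

lemma isPolygonDiagonal_wrapEdge {e : ℕ × ℕ} (he : IsPolygonDiagonal (m - b + a + 1) e) :
    IsPolygonDiagonal m (wrapEdge m b e) := by
  simp only [IsPolygonDiagonal, wrapEdge] at *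
  split_ifs <;> omega

lemma wrapEdge_injOn : Set.InjOn (wrapEdge m b) {e | IsPolygonDiagonal (m - b + a + 1) e} := by
  rintro ⟨x, y⟩ (he : IsPolygonDiagonal _ _) ⟨u, w⟩ (hf : IsPolygonDiagonal _ _) h
  simp only [IsPolygonDiagonal, wrapEdge] at *
  split_ifs at h <;> simp only [Prod.mk.injEq] at h ⊢ <;> omega

lemma diagonalsCross_wrapEdge {e f : ℕ × ℕ} (he : IsPolygonDiagonal (m - b + a + 1) e)
    (hf : IsPolygonDiagonal (m - b + a + 1) f) :
    DiagonalsCross (wrapEdge m b e) (wrapEdge m b f) ↔ DiagonalsCross e f := by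
  simp only [IsPolygonDiagonal, DiagonalsCross, wrapEdge] at *
  split_ifs <;> omega

lemma not_diagonalsCross_wrapEdge {e : ℕ × ℕ} (he : IsPolygonDiagonal (m - b + a + 1) e) :
    ¬ DiagonalsCross (wrapEdge m b e) (a, b) := by
  simp only [IsPolygonDiagonal, DiagonalsCross, wrapEdge] at *
  split_ifs <;> omega

lemma not_diagonalsCross_shiftEdge_wrapEdge {e f : ℕ × ℕ} (he : IsPolygonDiagonal (b - a + 1) e)
    (hf : IsPolygonDiagonal (m - b + a + 1) f) :
    ¬ DiagonalsCross (shiftEdge a e) (wrapEdge m b f) := by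
  simp only [IsPolygonDiagonal, DiagonalsCross, shiftEdge, wrapEdge] at *
  split_ifs <;> omega

lemma wrapEdge_ne {e : ℕ × ℕ} (he : IsPolygonDiagonal (m - b + a + 1) e) :
    wrapEdge m b e ≠ (a, b) := by
  simp only [IsPolygonDiagonal, wrapEdge, ne_eq] at *
  split_ifs <;> simp only [Prod.mk.injEq] <;> omega

lemma shiftEdge_ne_wrapEdge {e f : ℕ × ℕ} (he : IsPolygonDiagonal (b - a + 1) e)
    (hf : IsPolygonDiagonal (m - b + a + 1) f) : shiftEdge a e ≠ wrapEdge m b f := by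
  simp only [IsPolygonDiagonal, shiftEdge, wrapEdge, ne_eq] at *
  split_ifs <;> simp only [Prod.mk.injEq] <;> omega

lemma eq_or_exists_shiftEdge_or_exists_wrapEdge {e : ℕ × ℕ} (he : IsPolygonDiagonal m e)
    (hc : ¬ DiagonalsCross e (a, b)) :
    e = (a, b) ∨ (∃ f, IsPolygonDiagonal (b - a + 1) f ∧ shiftEdge a f = e) ∨
      ∃ f, IsPolygonDiagonal (m - b + a + 1) f ∧ wrapEdge m b f = e := by
  obtain ⟨x, y⟩ := e
  simp only [IsPolygonDiagonal, DiagonalsCross] at hd he hc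
  by_cases hxy : (x, y) = (a, b)
  · exact Or.inl hxy
  simp only [Prod.mk.injEq] at hxy
  by_cases hin : a ≤ x ∧ y ≤ b
  · refine Or.inr (Or.inl ⟨(x - a, y - a), ?_, ?_⟩) <;>
      simp only [IsPolygonDiagonal, shiftEdge, Prod.mk.injEq] <;> omega
  refine Or.inr (Or.inr ⟨if b ≤ x then (x - b, y - b) else if b ≤ y then (y - b, x + (m - b))
    else (x + (m - b), y + (m - b)), ?_, ?_⟩) <;>
    simp only [IsPolygonDiagonal, wrapEdge] <;> split_ifs <;> simp only [Prod.mk.injEq] <;> omega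

lemma IsNoncrossing.outerPart (hT : IsNoncrossing m T) :
    IsNoncrossing (m - b + a + 1) (outerPart m a b T) := by
  simp only [Triangulation.outerPart, IsNoncrossing, mem_filter, mem_diagonals]
  exact ⟨fun e he => he.1, fun e he f hf =>
    (diagonalsCross_wrapEdge hd he.1 hf.1).not.1 (hT.2 _ he.2 _ hf.2)⟩

lemma IsNoncrossing.glue (h₁ : IsNoncrossing (b - a + 1) T₁)
    (h₂ : IsNoncrossing (m - b + a + 1) T₂) : IsNoncrossing m (glue m a b T₁ T₂) := by
  have hd' : ¬ DiagonalsCross (a, b) (a, b) := by simp [DiagonalsCross]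
  refine ⟨fun e he => ?_, fun e he f hf => ?_⟩
  · rcases mem_glue.1 he with rfl | ⟨x, hx, rfl⟩ | ⟨x, hx, rfl⟩
    exacts [hd, isPolygonDiagonal_shiftEdge hd (h₁.1 x hx),
      isPolygonDiagonal_wrapEdge hd (h₂.1 x hx)]
  rcases mem_glue.1 he with rfl | ⟨x, hx, rfl⟩ | ⟨x, hx, rfl⟩ <;>
    rcases mem_glue.1 hf with rfl | ⟨y, hy, rfl⟩ | ⟨y, hy, rfl⟩
  · exact hd'
  · rw [diagonalsCross_comm]; exact not_diagonalsCross_shiftEdge (h₁.1 y hy)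
  · rw [diagonalsCross_comm]; exact not_diagonalsCross_wrapEdge hd (h₂.1 y hy)
  · exact not_diagonalsCross_shiftEdge (h₁.1 x hx)
  · rw [diagonalsCross_shiftEdge]; exact h₁.2 x hx y hy
  · exact not_diagonalsCross_shiftEdge_wrapEdge hd (h₁.1 x hx) (h₂.1 y hy)
  · exact not_diagonalsCross_wrapEdge hd (h₂.1 x hx)
  · rw [diagonalsCross_comm]
    exact not_diagonalsCross_shiftEdge_wrapEdge hd (h₁.1 y hy) (h₂.1 x hx)
  · rw [diagonalsCross_wrapEdge hd (h₂.1 x hx) (h₂.1 y hy)]; exact h₂.2 x hx y hy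

lemma card_filter_glue (h₁ : ∀ e ∈ T₁, IsPolygonDiagonal (b - a + 1) e)
    (h₂ : ∀ e ∈ T₂, IsPolygonDiagonal (m - b + a + 1) e) (Q : ℕ × ℕ → Prop) [DecidablePred Q] :
    #((glue m a b T₁ T₂).filter Q) = (if Q (a, b) then 1 else 0) +
      #(T₁.filter fun e => Q (shiftEdge a e)) + #(T₂.filter fun e => Q (wrapEdge m b e)) := by
  have hdisj : Disjoint ((T₁.filter fun e => Q (shiftEdge a e)).image (shiftEdge a))
      ((T₂.filter fun e => Q (wrapEdge m b e)).image (wrapEdge m b)) := by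
    simp only [disjoint_left, mem_image, mem_filter]
    rintro _ ⟨e, he, rfl⟩ ⟨f, hf, hef⟩
    exact shiftEdge_ne_wrapEdge hd (h₁ e he.1) (h₂ f hf.1) hef.symm
  have hinj : Set.InjOn (wrapEdge m b) (T₂.filter fun e => Q (wrapEdge m b e)) :=
    (wrapEdge_injOn hd).mono fun e he => h₂ e (mem_filter.1 he).1
  have hcard : #((T₁.filter fun e => Q (shiftEdge a e)).image (shiftEdge a) ∪
      (T₂.filter fun e => Q (wrapEdge m b e)).image (wrapEdge m b)) =
      #(T₁.filter fun e => Q (shiftEdge a e)) + #(T₂.filter fun e => Q (wrapEdge m b e)) := by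
    rw [card_union_of_disjoint hdisj, card_image_of_injective _ shiftEdge_injective,
      card_image_of_injOn hinj]
  rw [glue, filter_insert, filter_union, filter_image, filter_image]
  split_ifs with hQ
  · rw [card_insert_of_notMem, hcard]
    · ring
    simp only [mem_union, mem_image, mem_filter, not_or, not_exists, not_and]
    exact ⟨fun e he => shiftEdge_ne (h₁ e he.1), fun e he => wrapEdge_ne hd (h₂ e he.1)⟩
  · rw [hcard, zero_add]

lemma card_glue (h₁ : ∀ e ∈ T₁, IsPolygonDiagonal (b - a + 1) e)
    (h₂ : ∀ e ∈ T₂, IsPolygonDiagonal (m - b + a + 1) e) :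
    #(glue m a b T₁ T₂) = 1 + #T₁ + #T₂ := by
  simpa using card_filter_glue hd h₁ h₂ fun _ => True

lemma shiftEdge_mem_glue_iff (h₂ : ∀ e ∈ T₂, IsPolygonDiagonal (m - b + a + 1) e) {e : ℕ × ℕ}
    (he : IsPolygonDiagonal (b - a + 1) e) : shiftEdge a e ∈ glue m a b T₁ T₂ ↔ e ∈ T₁ := by
  rw [mem_glue]
  constructor
  · rintro (h | ⟨f, hf, hfe⟩ | ⟨f, hf, hfe⟩)
    · exact absurd h (shiftEdge_ne he)
    · rwa [← shiftEdge_injective hfe]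
    · exact absurd hfe.symm (shiftEdge_ne_wrapEdge hd he (h₂ f hf))
  · exact fun h => Or.inr (Or.inl ⟨e, h, rfl⟩)

lemma wrapEdge_mem_glue_iff (h₁ : ∀ e ∈ T₁, IsPolygonDiagonal (b - a + 1) e)
    (h₂ : ∀ e ∈ T₂, IsPolygonDiagonal (m - b + a + 1) e) {e : ℕ × ℕ}
    (he : IsPolygonDiagonal (m - b + a + 1) e) : wrapEdge m b e ∈ glue m a b T₁ T₂ ↔ e ∈ T₂ := by
  rw [mem_glue]
  constructor
  · rintro (h | ⟨f, hf, hfe⟩ | ⟨f, hf, hfe⟩)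
    · exact absurd h (wrapEdge_ne hd he)
    · exact absurd hfe (shiftEdge_ne_wrapEdge hd (h₁ f hf) he)
    · rwa [← wrapEdge_injOn hd (h₂ f hf) he hfe]
  · exact fun h => Or.inr (Or.inr ⟨e, h, rfl⟩)

lemma innerPart_glue (h₁ : ∀ e ∈ T₁, IsPolygonDiagonal (b - a + 1) e)
    (h₂ : ∀ e ∈ T₂, IsPolygonDiagonal (m - b + a + 1) e) :
    innerPart a b (glue m a b T₁ T₂) = T₁ := by
  ext e
  simp only [Triangulation.innerPart, mem_filter, mem_diagonals]
  exact ⟨fun ⟨he, h⟩ => (shiftEdge_mem_glue_iff hd h₂ he).1 h,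
    fun h => ⟨h₁ e h, (shiftEdge_mem_glue_iff hd h₂ (h₁ e h)).2 h⟩⟩

lemma outerPart_glue (h₁ : ∀ e ∈ T₁, IsPolygonDiagonal (b - a + 1) e)
    (h₂ : ∀ e ∈ T₂, IsPolygonDiagonal (m - b + a + 1) e) :
    outerPart m a b (glue m a b T₁ T₂) = T₂ := by
  ext e
  simp only [Triangulation.outerPart, mem_filter, mem_diagonals]
  exact ⟨fun ⟨he, h⟩ => (wrapEdge_mem_glue_iff hd h₁ h₂ he).1 h,
    fun h => ⟨h₂ e h, (wrapEdge_mem_glue_iff hd h₁ h₂ (h₂ e h)).2 h⟩⟩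

lemma glue_innerPart_outerPart (hT : IsNoncrossing m T) (hdT : (a, b) ∈ T) :
    glue m a b (innerPart a b T) (outerPart m a b T) = T := by
  ext e
  simp only [mem_glue, Triangulation.innerPart, Triangulation.outerPart, mem_filter,
    mem_diagonals]
  constructor
  · rintro (rfl | ⟨f, ⟨-, hf⟩, rfl⟩ | ⟨f, ⟨-, hf⟩, rfl⟩) <;> assumption
  · intro he
    rcases eq_or_exists_shiftEdge_or_exists_wrapEdge hd (hT.1 e he) (hT.2 e he _ hdT) with
      h | ⟨f, hf, rfl⟩ | ⟨f, hf, rfl⟩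
    exacts [Or.inl h, Or.inr (Or.inl ⟨f, ⟨hf, he⟩, rfl⟩), Or.inr (Or.inr ⟨f, ⟨hf, he⟩, rfl⟩)]

end Split

section Triangulations

variable {m : ℕ} {T : Finset (ℕ × ℕ)}

theorem IsNoncrossing.card_le (hT : IsNoncrossing m T) : #T ≤ m - 3 := by
  induction m using Nat.strong_induction_on generalizing T with
  | _ m ih =>
  obtain rfl | ⟨⟨a, b⟩, hab⟩ := T.eq_empty_or_nonempty
  · simp
  have hd := hT.1 _ hab
  have hT₁ := hT.innerPart (a := a) (b := b)
  have hT₂ := hT.outerPart hd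
  have h₁ := ih (b - a + 1) (by unfold IsPolygonDiagonal at hd; omega) hT₁
  have h₂ := ih (m - b + a + 1) (by unfold IsPolygonDiagonal at hd; omega) hT₂
  rw [← glue_innerPart_outerPart hd hT hab, card_glue hd hT₁.1 hT₂.1]
  unfold IsPolygonDiagonal at hd
  omega

theorem _root_.IsTriangulation.mem_iff_forall_not_diagonalsCross (hT : IsTriangulation m T)
    {d : ℕ × ℕ} (hd : IsPolygonDiagonal m d) : d ∈ T ↔ ∀ e ∈ T, ¬ DiagonalsCross e d := by
  refine ⟨fun hdT e he => hT.2.1 e he d hdT, fun h => ?_⟩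
  by_contra hdT
  have hins : IsNoncrossing m (insert d T) := by
    refine ⟨fun e he => ?_, fun e he f hf => ?_⟩
    · rcases mem_insert.1 he with rfl | he
      exacts [hd, hT.1 e he]
    rcases mem_insert.1 he with rfl | he' <;> rcases mem_insert.1 hf with rfl | hf'
    · simp [DiagonalsCross]
    · rw [diagonalsCross_comm]; exact h f hf'
    · exact h e he'
    · exact hT.2.1 e he' f hf'
  have := hins.card_le
  rw [card_insert_of_notMem hdT, hT.2.2] at this
  omega

def triangulations (m : ℕ) : Finset (Finset (ℕ × ℕ)) :=
  (diagonals m).powerset.filter (IsTriangulation m)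

lemma mem_triangulations : T ∈ triangulations m ↔ IsTriangulation m T := by
  simp only [triangulations, mem_filter, mem_powerset, and_iff_right_iff_imp]
  exact fun hT e he => mem_diagonals.2 (hT.1 e he)

section Split

variable {a b : ℕ} {T₁ T₂ : Finset (ℕ × ℕ)} (hd : IsPolygonDiagonal m (a, b))
include hd

lemma isTriangulation_glue (h₁ : IsTriangulation (b - a + 1) T₁)
    (h₂ : IsTriangulation (m - b + a + 1) T₂) : IsTriangulation m (glue m a b T₁ T₂) := by
  rw [isTriangulation_iff] at *
  refine ⟨h₁.1.glue hd h₂.1, ?_⟩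
  rw [card_glue hd h₁.1.1 h₂.1.1, h₁.2, h₂.2]
  unfold IsPolygonDiagonal at hd
  omega

lemma _root_.IsTriangulation.innerPart_outerPart (hT : IsTriangulation m T) (hdT : (a, b) ∈ T) :
    IsTriangulation (b - a + 1) (innerPart a b T) ∧
      IsTriangulation (m - b + a + 1) (outerPart m a b T) := by
  simp only [isTriangulation_iff] at *
  have hT₁ := hT.1.innerPart (a := a) (b := b)
  have hT₂ := hT.1.outerPart hd
  have hcard := card_glue hd hT₁.1 hT₂.1
  rw [glue_innerPart_outerPart hd hT.1 hdT, hT.2] at hcard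
  have := hT₁.card_le
  have := hT₂.card_le
  unfold IsPolygonDiagonal at hd
  exact ⟨⟨hT₁, by omega⟩, ⟨hT₂, by omega⟩⟩

theorem card_filter_triangulations_mem (P : Finset (ℕ × ℕ) → Prop) [DecidablePred P]
    (P₁ P₂ : Finset (ℕ × ℕ) → Prop) [DecidablePred P₁] [DecidablePred P₂]
    (hP : ∀ T₁ ∈ triangulations (b - a + 1), ∀ T₂ ∈ triangulations (m - b + a + 1),
      P (glue m a b T₁ T₂) ↔ P₁ T₁ ∧ P₂ T₂) :
    #((triangulations m).filter fun T => (a, b) ∈ T ∧ P T) =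
      #((triangulations (b - a + 1)).filter P₁) *
        #((triangulations (m - b + a + 1)).filter P₂) := by
  rw [← card_product]
  refine card_nbij' (fun T => (innerPart a b T, outerPart m a b T))
    (fun p => glue m a b p.1 p.2) ?_ ?_ ?_ ?_
  · intro T hT
    simp only [mem_coe, mem_filter, mem_triangulations] at hT
    obtain ⟨hT, hdT, hPT⟩ := hT
    obtain ⟨h₁, h₂⟩ := hT.innerPart_outerPart hd hdT
    rw [← glue_innerPart_outerPart hd (isTriangulation_iff.1 hT).1 hdT,
      hP _ (mem_triangulations.2 h₁) _ (mem_triangulations.2 h₂)] at hPT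
    simp only [mem_coe, mem_product, mem_filter, mem_triangulations]
    exact ⟨⟨h₁, hPT.1⟩, h₂, hPT.2⟩
  · rintro ⟨T₁, T₂⟩ hp
    simp only [mem_coe, mem_product, mem_filter] at hp
    obtain ⟨⟨h₁, hP₁⟩, h₂, hP₂⟩ := hp
    simp only [mem_coe, mem_filter, mem_triangulations]
    exact ⟨isTriangulation_glue hd (mem_triangulations.1 h₁) (mem_triangulations.1 h₂),
      mem_insert_self _ _, (hP _ h₁ _ h₂).2 ⟨hP₁, hP₂⟩⟩
  · intro T hT
    simp only [mem_coe, mem_filter, mem_triangulations] at hT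
    exact glue_innerPart_outerPart hd (isTriangulation_iff.1 hT.1).1 hT.2.1
  · rintro ⟨T₁, T₂⟩ hp
    simp only [mem_coe, mem_product, mem_filter, mem_triangulations] at hp
    have h₁ := hp.1.1.1
    have h₂ := hp.2.1.1
    simp only [innerPart_glue hd h₁ h₂, outerPart_glue hd h₁ h₂]

theorem card_filter_mem_triangulations :
    #((triangulations m).filter ((a, b) ∈ ·)) =
      #(triangulations (b - a + 1)) * #(triangulations (m - b + a + 1)) := by
  simpa using card_filter_triangulations_mem hd (fun _ => True) (fun _ => True) (fun _ => True)
    (by simp)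

end Split

lemma triangulations_eq_singleton_empty (hm : m ≤ 3) : triangulations m = {∅} := by
  ext T
  simp only [mem_triangulations, mem_singleton]
  constructor
  · exact fun hT => card_eq_zero.1 (by rw [hT.2.2]; omega)
  · rintro rfl
    exact ⟨by simp, by simp, by simp; omega⟩

lemma _root_.IsTriangulation.ear_zero_mem_iff {c : ℕ} (hc : 1 ≤ c)
    (hT : IsTriangulation (c + 3) T) :
    (1, c + 2) ∈ T ↔ ∀ i < c, (0, i + 2) ∉ T := by
  rw [hT.mem_iff_forall_not_diagonalsCross (d := (1, c + 2))
    (by simp only [IsPolygonDiagonal]; omega)]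
  constructor
  · exact fun h i hi hmem => h _ hmem (by simp only [DiagonalsCross]; omega)
  · rintro h ⟨x, y⟩ he hc
    have hxy := hT.1 _ he
    simp only [IsPolygonDiagonal, DiagonalsCross] at hxy hc
    obtain rfl : x = 0 := by omega
    exact h (y - 2) (by omega) (by rwa [Nat.sub_add_cancel (by omega)])

lemma _root_.IsTriangulation.ear_last_mem_iff (hm : 1 ≤ m) (hT : IsTriangulation (m + 3) T) :
    (0, m + 1) ∈ T ↔ ∀ i ∈ range m, (i + 1, m + 2) ∉ T := by
  rw [hT.mem_iff_forall_not_diagonalsCross (d := (0, m + 1))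
    (by simp only [IsPolygonDiagonal]; omega)]
  constructor
  · exact fun h i hi hmem => h _ hmem (by simp only [DiagonalsCross]; simp at hi; omega)
  · rintro h ⟨x, y⟩ he hc
    have hxy := hT.1 _ he
    simp only [IsPolygonDiagonal, DiagonalsCross] at hxy hc
    obtain rfl : y = m + 2 := by omega
    exact h (x - 1) (by simp; omega) (by rwa [Nat.sub_add_cancel (by omega)])

lemma card_filter_triangulations_forall_notMem_zero (c : ℕ) :
    #((triangulations (c + 3)).filter fun T => ∀ i < c, (0, i + 2) ∉ T) =
      #(triangulations (c + 2)) := by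
  obtain rfl | hc := Nat.eq_zero_or_pos c
  · simp [triangulations_eq_singleton_empty]
  rw [filter_congr fun T hT => ((mem_triangulations.1 hT).ear_zero_mem_iff hc).symm,
    card_filter_mem_triangulations (m := c + 3) (a := 1) (b := c + 2)
      (by simp only [IsPolygonDiagonal]; omega),
    triangulations_eq_singleton_empty (m := c + 3 - (c + 2) + 1 + 1) (by omega),
    card_singleton, mul_one, show c + 2 - 1 + 1 = c + 2 by omega]

lemma card_filter_triangulations_least_last {c : ℕ} (hc : c < m) :
    #((triangulations (m + 3)).filter fun T => (c + 1, m + 2) ∈ T ∧ ∀ i < c, (i + 1, m + 2) ∉ T) =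
      #(triangulations (m + 2 - c)) * #(triangulations (c + 2)) := by
  have hd : IsPolygonDiagonal (m + 3) (c + 1, m + 2) := by simp only [IsPolygonDiagonal]; omega
  have hsize : m + 3 - (m + 2) + (c + 1) + 1 = c + 3 := by omega
  rw [card_filter_triangulations_mem hd _ (fun _ => True) (fun T => ∀ i < c, (0, i + 2) ∉ T),
    filter_true, show m + 2 - (c + 1) + 1 = m + 2 - c by omega, hsize,
    card_filter_triangulations_forall_notMem_zero]
  intro T₁ hT₁ T₂ hT₂
  rw [mem_triangulations] at hT₁ hT₂
  rw [true_and]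
  refine forall₂_congr fun i hi => not_congr ?_
  convert wrapEdge_mem_glue_iff hd hT₁.1 hT₂.1 (e := (0, i + 2))
    (by simp only [IsPolygonDiagonal]; omega) using 2
  simp only [wrapEdge]
  split_ifs <;> simp only [Prod.mk.injEq] <;> omega

theorem card_triangulations (m : ℕ) : #(triangulations (m + 2)) = catalan m := by
  induction m using Nat.strong_induction_on with
  | _ m ih =>
  rcases Nat.lt_or_ge m 2 with hm | hm
  · rw [triangulations_eq_singleton_empty (by omega), card_singleton]
    interval_cases m <;> simp
  obtain ⟨m, rfl⟩ : ∃ n, m = n + 1 := ⟨m - 1, by omega⟩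
  have hlast : #((triangulations (m + 3)).filter fun T => ∀ i ∈ range m, (i + 1, m + 2) ∉ T) =
      catalan m := by
    rw [filter_congr fun T hT => ((mem_triangulations.1 hT).ear_last_mem_iff (by omega)).symm,
      card_filter_mem_triangulations (m := m + 3) (a := 0) (b := m + 1)
        (by simp only [IsPolygonDiagonal]; omega),
      show m + 1 - 0 + 1 = m + 2 by omega, show m + 3 - (m + 1) + 0 + 1 = 3 by omega,
      triangulations_eq_singleton_empty le_rfl, card_singleton, mul_one, ih m (by omega)]
  have hfan : ∀ c ∈ range m, #((triangulations (m + 3)).filter fun T =>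
      (c + 1, m + 2) ∈ T ∧ ∀ i < c, (i + 1, m + 2) ∉ T) = catalan c * catalan (m - c) := by
    intro c hc
    rw [mem_range] at hc
    rw [card_filter_triangulations_least_last hc, show m + 2 - c = m - c + 2 by omega,
      ih c (by omega), ih (m - c) (by omega), mul_comm]
  rw [card_eq_card_filter_add_sum_card_filter_least _ (fun i T => (i + 1, m + 2) ∈ T) (range m)
      fun T hT i hi => ?_, hlast, sum_congr rfl hfan, catalan_succ,
    Fin.sum_univ_eq_sum_range (fun i => catalan i * catalan (m - i)), sum_range_succ, Nat.sub_self,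
    catalan_zero, mul_one, add_comm]
  have := (mem_triangulations.1 hT).1 _ hi
  simp only [IsPolygonDiagonal, mem_range] at this ⊢
  omega

end Triangulations

/-- The diagonals in `antidiagonal (m - 1)` are those parallel to the side `{m - 1, 0}`. -/
def parallelTriangulations (m k : ℕ) : Finset (Finset (ℕ × ℕ)) :=
  (triangulations m).filter fun T => #(T ∩ antidiagonal (m - 1)) = k

section Parallel

variable {m j : ℕ} {T T₁ T₂ : Finset (ℕ × ℕ)}

lemma card_inter_antidiagonal_eq_zero_iff (hT : ∀ e ∈ T, IsPolygonDiagonal m e) :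
    #(T ∩ antidiagonal (m - 1)) = 0 ↔ ∀ j ∈ range ((m - 3) / 2), (j + 1, m - 2 - j) ∉ T := by
  rw [card_eq_zero, eq_empty_iff_forall_notMem]
  constructor
  · intro h j hj hmem
    rw [mem_range] at hj
    exact h _ (mem_inter.2 ⟨hmem, by rw [HasAntidiagonal.mem_antidiagonal]; omega⟩)
  · rintro h ⟨x, y⟩ hxy
    rw [mem_inter, HasAntidiagonal.mem_antidiagonal] at hxy
    have he := hT _ hxy.1
    simp only [IsPolygonDiagonal] at he hxy
    exact h (x - 1) (by rw [mem_range]; omega)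
      (by convert hxy.1 using 2 <;> omega)

lemma card_inter_antidiagonal_glue (hj : 2 * j + 5 ≤ m)
    (h₁ : ∀ e ∈ T₁, IsPolygonDiagonal (m - 2 * j - 2) e)
    (h₂ : ∀ e ∈ T₂, IsPolygonDiagonal (2 * j + 4) e) :
    #(glue m (j + 1) (m - 2 - j) T₁ T₂ ∩ antidiagonal (m - 1)) =
      1 + #(T₁ ∩ antidiagonal (m - 2 * j - 2 - 1)) + #(T₂ ∩ antidiagonal (2 * j + 4 - 1)) := by
  have hd : IsPolygonDiagonal m (j + 1, m - 2 - j) := by simp only [IsPolygonDiagonal]; omega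
  rw [show m - 2 * j - 2 = m - 2 - j - (j + 1) + 1 by omega] at h₁ ⊢
  rw [show 2 * j + 4 = m - (m - 2 - j) + (j + 1) + 1 by omega] at h₂ ⊢
  simp only [← filter_mem_eq_inter]
  have hdA : (j + 1, m - 2 - j) ∈ antidiagonal (m - 1) := by
    rw [HasAntidiagonal.mem_antidiagonal]; omega
  rw [card_filter_glue hd h₁ h₂ (· ∈ antidiagonal (m - 1)), if_pos hdA]
  congr 2
  · apply congrArg card
    apply filter_congr
    intro e he
    have := h₁ e he
    simp only [IsPolygonDiagonal, shiftEdge, HasAntidiagonal.mem_antidiagonal] at this ⊢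
    omega
  · apply filter_congr
    intro e he
    have := h₂ e he
    simp only [IsPolygonDiagonal, wrapEdge, HasAntidiagonal.mem_antidiagonal] at this ⊢
    split_ifs <;> omega

lemma forall_notMem_glue_iff (hj : 2 * j + 5 ≤ m)
    (h₁ : ∀ e ∈ T₁, IsPolygonDiagonal (m - 2 * j - 2) e)
    (h₂ : ∀ e ∈ T₂, IsPolygonDiagonal (2 * j + 4) e) :
    (∀ i < j, (i + 1, m - 2 - i) ∉ glue m (j + 1) (m - 2 - j) T₁ T₂) ↔
      #(T₂ ∩ antidiagonal (2 * j + 4 - 1)) = 0 := by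
  have hd : IsPolygonDiagonal m (j + 1, m - 2 - j) := by simp only [IsPolygonDiagonal]; omega
  trans ∀ i < j, (j - i, i + j + 3) ∉ T₂
  · rw [show m - 2 * j - 2 = m - 2 - j - (j + 1) + 1 by omega] at h₁
    rw [show 2 * j + 4 = m - (m - 2 - j) + (j + 1) + 1 by omega] at h₂
    refine forall₂_congr fun i hi => not_congr ?_
    convert wrapEdge_mem_glue_iff hd h₁ h₂ (e := (j - i, i + j + 3))
      (by simp only [IsPolygonDiagonal]; omega) using 2
    simp only [wrapEdge]
    split_ifs <;> simp only [Prod.mk.injEq] <;> omega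
  rw [card_eq_zero, eq_empty_iff_forall_notMem]
  constructor
  · rintro h ⟨x, y⟩ hxy
    rw [mem_inter, HasAntidiagonal.mem_antidiagonal] at hxy
    have he := h₂ _ hxy.1
    simp only [IsPolygonDiagonal] at he hxy
    exact h (j - x) (by omega) (by convert hxy.1 using 2 <;> omega)
  · refine fun h i hi hmem => h _ (mem_inter.2 ⟨hmem, ?_⟩)
    rw [HasAntidiagonal.mem_antidiagonal]
    omega

lemma card_filter_triangulations_least_parallel (hj : 2 * j + 5 ≤ m) :
    #((triangulations m).filter fun T =>
        (j + 1, m - 2 - j) ∈ T ∧ ∀ i < j, (i + 1, m - 2 - i) ∉ T) =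
      #(triangulations (m - 2 * j - 2)) * #(parallelTriangulations (2 * j + 4) 0) := by
  have hd : IsPolygonDiagonal m (j + 1, m - 2 - j) := by simp only [IsPolygonDiagonal]; omega
  have hs₁ : m - 2 - j - (j + 1) + 1 = m - 2 * j - 2 := by omega
  have hs₂ : m - (m - 2 - j) + (j + 1) + 1 = 2 * j + 4 := by omega
  rw [card_filter_triangulations_mem hd _ (fun _ => True)
    (fun T => #(T ∩ antidiagonal (2 * j + 4 - 1)) = 0), filter_true, hs₁, hs₂]
  · rfl
  intro T₁ hT₁ T₂ hT₂
  rw [hs₁, mem_triangulations] at hT₁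
  rw [hs₂, mem_triangulations] at hT₂
  rw [true_and, forall_notMem_glue_iff hj hT₁.1 hT₂.1]

lemma card_filter_parallelTriangulations_least_parallel (hj : 2 * j + 5 ≤ m) (k : ℕ) :
    #((parallelTriangulations m (k + 1)).filter fun T =>
        (j + 1, m - 2 - j) ∈ T ∧ ∀ i < j, (i + 1, m - 2 - i) ∉ T) =
      #(parallelTriangulations (m - 2 * j - 2) k) * #(parallelTriangulations (2 * j + 4) 0) := by
  have hd : IsPolygonDiagonal m (j + 1, m - 2 - j) := by simp only [IsPolygonDiagonal]; omega
  have hs₁ : m - 2 - j - (j + 1) + 1 = m - 2 * j - 2 := by omega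
  have hs₂ : m - (m - 2 - j) + (j + 1) + 1 = 2 * j + 4 := by omega
  rw [parallelTriangulations, filter_filter]
  simp only [and_left_comm (a := #(_ ∩ _) = _)]
  rw [card_filter_triangulations_mem hd _ (fun T => #(T ∩ antidiagonal (m - 2 * j - 2 - 1)) = k)
    (fun T => #(T ∩ antidiagonal (2 * j + 4 - 1)) = 0), hs₁, hs₂]
  · rfl
  intro T₁ hT₁ T₂ hT₂
  rw [hs₁, mem_triangulations] at hT₁
  rw [hs₂, mem_triangulations] at hT₂
  rw [card_inter_antidiagonal_glue hj hT₁.1 hT₂.1, forall_notMem_glue_iff hj hT₁.1 hT₂.1]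
  omega

lemma mem_range_of_isPolygonDiagonal {i : ℕ} (hi : IsPolygonDiagonal m (i + 1, m - 2 - i)) :
    i ∈ range ((m - 3) / 2) := by
  simp only [IsPolygonDiagonal] at hi
  rw [mem_range]
  omega

theorem card_triangulations_eq_add_sum (m : ℕ) :
    #(triangulations m) = #(parallelTriangulations m 0) +
      ∑ j ∈ range ((m - 3) / 2),
        #(triangulations (m - 2 * j - 2)) * #(parallelTriangulations (2 * j + 4) 0) := by
  rw [card_eq_card_filter_add_sum_card_filter_least _ (fun i T => (i + 1, m - 2 - i) ∈ T) _
    fun T hT i hi => mem_range_of_isPolygonDiagonal ((mem_triangulations.1 hT).1 _ hi)]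
  congr 1
  · rw [parallelTriangulations, filter_congr fun T hT =>
      card_inter_antidiagonal_eq_zero_iff (mem_triangulations.1 hT).1]
  · refine sum_congr rfl fun j hj => ?_
    rw [mem_range] at hj
    exact card_filter_triangulations_least_parallel (by omega)

theorem card_parallelTriangulations_succ (m k : ℕ) :
    #(parallelTriangulations m (k + 1)) =
      ∑ j ∈ range ((m - 3) / 2),
        #(parallelTriangulations (m - 2 * j - 2) k) * #(parallelTriangulations (2 * j + 4) 0) := by
  rw [card_eq_card_filter_add_sum_card_filter_least (parallelTriangulations m (k + 1))
    (fun i T => (i + 1, m - 2 - i) ∈ T) _ fun T hT i hi =>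
      mem_range_of_isPolygonDiagonal ((mem_triangulations.1 (mem_filter.1 hT).1).1 _ hi)]
  rw [card_eq_zero.2, zero_add]
  · refine sum_congr rfl fun j hj => ?_
    rw [mem_range] at hj
    exact card_filter_parallelTriangulations_least_parallel (by omega) k
  · refine filter_eq_empty_iff.2 fun T hT h => ?_
    rw [parallelTriangulations, mem_filter] at hT
    rw [← card_inter_antidiagonal_eq_zero_iff (mem_triangulations.1 hT.1).1] at h
    omega

theorem card_parallelTriangulations_zero (n : ℕ) :
    #(parallelTriangulations (2 * n + 4) 0) = 2 * catalan (2 * n + 1) := by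
  induction n using Nat.strong_induction_on with
  | _ n ih =>
  have h := card_triangulations_eq_add_sum (2 * n + 4)
  rw [show (2 * n + 4 - 3) / 2 = n by omega, card_triangulations (2 * n + 2),
    catalan_two_mul_add_two, sum_range_succ, Nat.sub_self, catalan_zero, mul_one] at h
  have hsum : ∑ j ∈ range n,
      #(triangulations (2 * n + 4 - 2 * j - 2)) * #(parallelTriangulations (2 * j + 4) 0) =
      2 * ∑ j ∈ range n, catalan (2 * j + 1) * catalan (2 * (n - j)) := by
    rw [mul_sum]
    refine sum_congr rfl fun j hj => ?_
    rw [mem_range] at hj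
    rw [show 2 * n + 4 - 2 * j - 2 = 2 * (n - j) + 2 by omega, card_triangulations, ih j hj]
    ring
  omega

end Parallel

/-- The reflection `v ↦ -v mod m`, which swaps the sides `{0, 1}` and `{m - 1, 0}`. -/
def reflectEdge (m : ℕ) (e : ℕ × ℕ) : ℕ × ℕ :=
  if e.1 = 0 then (0, m - e.2) else (m - e.2, m - e.1)

section Reflect

variable {m : ℕ} {e f : ℕ × ℕ} {T : Finset (ℕ × ℕ)}

lemma isPolygonDiagonal_reflectEdge (he : IsPolygonDiagonal m e) :
    IsPolygonDiagonal m (reflectEdge m e) := by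
  simp only [IsPolygonDiagonal, reflectEdge] at *
  split_ifs <;> omega

lemma reflectEdge_reflectEdge (he : IsPolygonDiagonal m e) :
    reflectEdge m (reflectEdge m e) = e := by
  obtain ⟨x, y⟩ := e
  simp only [IsPolygonDiagonal, reflectEdge] at *
  split_ifs <;> simp only [Prod.mk.injEq] <;> omega

lemma diagonalsCross_reflectEdge (he : IsPolygonDiagonal m e) (hf : IsPolygonDiagonal m f) :
    DiagonalsCross (reflectEdge m e) (reflectEdge m f) ↔ DiagonalsCross e f := by
  simp only [IsPolygonDiagonal, DiagonalsCross, reflectEdge] at *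
  split_ifs <;> omega

lemma reflectEdge_mem_antidiagonal_iff (he : IsPolygonDiagonal m e) :
    reflectEdge m e ∈ antidiagonal (m - 1) ↔ (e.1 + e.2) % m = 1 := by
  simp only [IsPolygonDiagonal] at he
  have hmod : (e.1 + e.2) % m = if e.1 + e.2 < m then e.1 + e.2 else e.1 + e.2 - m := by
    split_ifs with h
    · exact Nat.mod_eq_of_lt h
    · rw [Nat.mod_eq_sub_mod (by omega), Nat.mod_eq_of_lt (by omega)]
  rw [hmod, HasAntidiagonal.mem_antidiagonal, reflectEdge]
  split_ifs <;> omega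

lemma image_reflectEdge_image_reflectEdge (hT : ∀ e ∈ T, IsPolygonDiagonal m e) :
    (T.image (reflectEdge m)).image (reflectEdge m) = T := by
  rw [image_image]
  exact (image_congr fun e he => reflectEdge_reflectEdge (hT e he)).trans image_id'

lemma card_filter_image_reflectEdge (hT : ∀ e ∈ T, IsPolygonDiagonal m e) (Q : ℕ × ℕ → Prop)
    [DecidablePred Q] :
    #((T.image (reflectEdge m)).filter Q) = #(T.filter fun e => Q (reflectEdge m e)) := by
  rw [filter_image, card_image_of_injOn fun e he f hf hef => by
    rw [← reflectEdge_reflectEdge (hT e (mem_filter.1 he).1),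
      ← reflectEdge_reflectEdge (hT f (mem_filter.1 hf).1), hef]]

lemma _root_.IsTriangulation.image_reflectEdge (hT : IsTriangulation m T) :
    IsTriangulation m (T.image (reflectEdge m)) := by
  refine ⟨fun e he => ?_, fun e he f hf => ?_, ?_⟩
  · obtain ⟨x, hx, rfl⟩ := mem_image.1 he
    exact isPolygonDiagonal_reflectEdge (hT.1 x hx)
  · obtain ⟨x, hx, rfl⟩ := mem_image.1 he
    obtain ⟨y, hy, rfl⟩ := mem_image.1 hf
    rw [diagonalsCross_reflectEdge (hT.1 x hx) (hT.1 y hy)]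
    exact hT.2.1 x hx y hy
  · simpa [hT.2.2] using card_filter_image_reflectEdge hT.1 fun _ => True

theorem card_filter_triangulations_mod_eq_one (m k : ℕ) :
    #((triangulations m).filter fun T => #(T.filter fun e => (e.1 + e.2) % m = 1) = k) =
      #(parallelTriangulations m k) := by
  refine card_nbij' (·.image (reflectEdge m)) (·.image (reflectEdge m)) ?_ ?_ ?_ ?_
  · intro T hT
    simp only [parallelTriangulations, mem_coe, mem_filter, mem_triangulations] at hT ⊢
    refine ⟨hT.1.image_reflectEdge, ?_⟩
    rw [← filter_mem_eq_inter, card_filter_image_reflectEdge hT.1.1, ← hT.2]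
    exact congrArg card (filter_congr fun e he => reflectEdge_mem_antidiagonal_iff (hT.1.1 e he))
  · intro T hT
    simp only [parallelTriangulations, mem_coe, mem_filter, mem_triangulations] at hT ⊢
    refine ⟨hT.1.image_reflectEdge, ?_⟩
    rw [card_filter_image_reflectEdge hT.1.1, ← hT.2, ← filter_mem_eq_inter]
    refine congrArg card (filter_congr fun e he => ?_)
    rw [← reflectEdge_mem_antidiagonal_iff (isPolygonDiagonal_reflectEdge (hT.1.1 e he)),
      reflectEdge_reflectEdge (hT.1.1 e he)]
  · intro T hT
    simp only [mem_coe, mem_filter, mem_triangulations] at hT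
    exact image_reflectEdge_image_reflectEdge hT.1.1
  · intro T hT
    simp only [parallelTriangulations, mem_coe, mem_filter, mem_triangulations] at hT
    exact image_reflectEdge_image_reflectEdge hT.1.1

end Reflect

theorem card_parallelTriangulations_two_mul {N : ℕ} (hN : 2 ≤ N) (k : ℕ) :
    #(parallelTriangulations (2 * N) k) =
      ∑ c ∈ univ.filter (fun c : Composition (N - 1) => c.length = k + 1),
        (c.blocks.map fun i => #(parallelTriangulations (2 * i + 2) 0)).prod := by
  induction k generalizing N with
  | zero =>
    have hsingle : univ.filter (fun c : Composition (N - 1) => c.length = 0 + 1) =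
        {Composition.single (N - 1) (by omega)} := by
      ext c
      rw [mem_filter, mem_singleton, Composition.eq_single_iff_length]
      simp
    rw [hsingle, sum_singleton, Composition.single_blocks, List.map_singleton, List.prod_singleton,
      show 2 * (N - 1) + 2 = 2 * N by omega]
  | succ k ih =>
    rw [card_parallelTriangulations_succ, Composition.sum_prod_map_blocks_length_add_two,
      show (2 * N - 3) / 2 = N - 1 - 1 by omega]
    refine sum_congr rfl fun j hj => ?_
    rw [mem_range] at hj
    rw [mul_comm, show 2 * (j + 1) + 2 = 2 * j + 4 by ring,
      show 2 * N - 2 * j - 2 = 2 * (N - j - 1) by omega, ih (by omega : 2 ≤ N - j - 1),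
      show N - j - 1 - 1 = N - 1 - (j + 1) by omega]

theorem card_parallelTriangulations_two_mul_eq_sum_catalan {N : ℕ} (hN : 2 ≤ N) (k : ℕ) :
    #(parallelTriangulations (2 * N) k) =
      ∑ c ∈ univ.filter (fun c : Composition (N - 1) => c.length = k + 1),
        2 ^ (k + 1) * (c.blocks.map fun i => catalan (2 * i - 1)).prod := by
  rw [card_parallelTriangulations_two_mul hN]
  refine sum_congr rfl fun c hc => ?_
  have hblock : ∀ i ∈ c.blocks,
      #(parallelTriangulations (2 * i + 2) 0) = 2 * catalan (2 * i - 1) := fun i hi => by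
    obtain ⟨j, rfl⟩ : ∃ j, i = j + 1 := ⟨i - 1, by have := c.one_le_blocks hi; omega⟩
    rw [show 2 * (j + 1) + 2 = 2 * j + 4 by ring, card_parallelTriangulations_zero,
      show 2 * (j + 1) - 1 = 2 * j + 1 by omega]
  rw [List.map_congr_left hblock, List.prod_map_mul, List.map_const', List.prod_replicate,
    c.blocks_length, (mem_filter.1 hc).2]

end Triangulation

theorem count_triangulations_with_k_parallel_to_01_general (n k : ℕ) (hn : 2 ≤ n) :
    {T : Finset (ℕ × ℕ) | IsTriangulation (2 * n) T ∧
        (T.filter (fun e => (e.1 + e.2) % (2 * n) = 1)).card = k}.ncard =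
      ∑ c ∈ Finset.univ.filter (fun c : Composition (n - 1) => c.length = k + 1),
        2 ^ (k + 1) * (c.blocks.map (fun i => catalan (2 * i - 1))).prod := by
  have hset : {T : Finset (ℕ × ℕ) | IsTriangulation (2 * n) T ∧
      (T.filter (fun e => (e.1 + e.2) % (2 * n) = 1)).card = k} =
      ↑((Triangulation.triangulations (2 * n)).filter
        fun T => #(T.filter fun e => (e.1 + e.2) % (2 * n) = 1) = k) := by
    ext T
    simp [Triangulation.mem_triangulations]
  rw [hset, Set.ncard_coe_finset, Triangulation.card_filter_triangulations_mod_eq_one,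
    Triangulation.card_parallelTriangulations_two_mul_eq_sum_catalan hn]

theorem count_triangulations_with_k_parallel_to_01 (n k : ℕ) (hn : 2 ≤ n) (hk : 1 ≤ k) :
    {T : Finset (ℕ × ℕ) | IsTriangulation (2 * n) T ∧
        (T.filter (fun e => (e.1 + e.2) % (2 * n) = 1)).card = k}.ncard =
      ∑ c ∈ Finset.univ.filter (fun c : Composition (n - 1) => c.length = k + 1),
        2 ^ (k + 1) * (c.blocks.map (fun i => catalan (2 * i - 1))).prod :=
  count_triangulations_with_k_parallel_to_01_general n k hn
end

section
/- The number of Dyck paths of semilength 2n+1 that avoid all points (4k, 0) for k = 1, 2, ..., n equals 2^{2n+1} * C_n - C_{2n+1}, where C_m denotes the m-th Catalan number. -/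
/-- `l` (a list of steps, `true` = up-step `(1,1)`, `false` = down-step `(1,-1)`)
is a Dyck path of semilength `m`: it has `2 * m` steps, ends on the x-axis,
and never goes below the x-axis. -/
def IsDyckPath (m : ℕ) (l : List Bool) : Prop :=
  l.length = 2 * m ∧ l.count true = l.count false ∧
    ∀ j, (l.take j).count false ≤ (l.take j).count true

/-- The height of the path after its first `j` steps. -/
def pathHeight (l : List Bool) (j : ℕ) : ℤ :=
  ((l.take j).count true : ℤ) - (l.take j).count false

/-!
Split a Dyck path of semilength `2n + 1` avoiding the points `(4k, 0)` at its last return to the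
axis before the end. Returns occur at even positions and not at positions `4k`, so the prefix is
either empty or an avoiding path of semilength `2t + 1` with `t < n`; the suffix is any primitive
path of semilength `2(n - t)`, and there are `C_{2(n-t)-1}` of those. Hence the counts `S_n`
satisfy `S = E + x O S`, where `E` and `O` are the even and odd bisections of the Catalan series
`c = 1 + x c²`. Bisecting that equation gives `E = 1 + 2xEO` and `O = E² + xO²`; from these, `E²`
solves `F = 1 + 4xF²`, so `E² = c(4x)`, and `(2E² - O)(1 - xO) = E`. Therefore `S = 2c(4x) - O`,
whose `n`-th coefficient is `2 · 4ⁿ C_n - C_{2n+1}`.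
-/

open Finset PowerSeries

lemma pathHeight_zero (l : List Bool) : pathHeight l 0 = 0 := by
  simp [pathHeight]

lemma pathHeight_cons_succ (b : Bool) (l : List Bool) (j : ℕ) :
    pathHeight (b :: l) (j + 1) = (if b then 1 else -1) + pathHeight l j := by
  cases b <;> simp [pathHeight] <;> ring

lemma pathHeight_append (l₁ l₂ : List Bool) (j : ℕ) :
    pathHeight (l₁ ++ l₂) j = pathHeight l₁ j + pathHeight l₂ (j - l₁.length) := by
  simp only [pathHeight, List.take_append, List.count_append]
  push_cast
  ring

lemma pathHeight_of_length_le {l : List Bool} {j : ℕ} (h : l.length ≤ j) :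
    pathHeight l j = pathHeight l l.length := by
  simp [pathHeight, List.take_of_length_le h]

lemma pathHeight_take (l : List Bool) (r j : ℕ) :
    pathHeight (l.take r) j = pathHeight l (min j r) := by
  simp [pathHeight, List.take_take]

lemma pathHeight_append_of_le_length {l₁ : List Bool} (l₂ : List Bool) {j : ℕ}
    (hj : j ≤ l₁.length) : pathHeight (l₁ ++ l₂) j = pathHeight l₁ j := by
  rw [pathHeight_append, Nat.sub_eq_zero_of_le hj, pathHeight_zero, add_zero]

lemma pathHeight_append_of_length_le {l₁ : List Bool} (l₂ : List Bool) {j : ℕ}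
    (hl₁ : pathHeight l₁ l₁.length = 0) (hj : l₁.length ≤ j) :
    pathHeight (l₁ ++ l₂) j = pathHeight l₂ (j - l₁.length) := by
  rw [pathHeight_append, pathHeight_of_length_le hj, hl₁, zero_add]

lemma pathHeight_drop {l : List Bool} {r : ℕ} (hr : pathHeight l r = 0) (hrl : r ≤ l.length)
    (j : ℕ) : pathHeight (l.drop r) j = pathHeight l (r + j) := by
  have hr' : pathHeight (l.take r) (l.take r).length = 0 := by
    rwa [pathHeight_take, List.length_take, min_eq_left hrl, min_self]
  conv_rhs => rw [← List.take_append_drop r l]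
  rw [pathHeight_append_of_length_le _ hr' (by simp), List.length_take, min_eq_left hrl,
    Nat.add_sub_cancel_left]

lemma even_of_pathHeight_eq_zero {l : List Bool} {j : ℕ} (h : pathHeight l j = 0)
    (hj : j ≤ l.length) : Even j := by
  have hcount := List.count_true_add_count_false (l.take j)
  rw [List.length_take, min_eq_left hj] at hcount
  simp only [pathHeight, sub_eq_zero, Nat.cast_inj] at h
  exact ⟨(l.take j).count true, by omega⟩

lemma isDyckPath_iff {m : ℕ} {l : List Bool} :
    IsDyckPath m l ↔
      l.length = 2 * m ∧ pathHeight l l.length = 0 ∧ ∀ j, 0 ≤ pathHeight l j := by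
  simp only [IsDyckPath, pathHeight, List.take_length, sub_eq_zero, sub_nonneg, Nat.cast_inj,
    Nat.cast_le]

namespace IsDyckPath

variable {m : ℕ} {l : List Bool}

lemma pathHeight_length (h : IsDyckPath m l) : pathHeight l l.length = 0 :=
  (isDyckPath_iff.mp h).2.1

lemma pathHeight_nonneg (h : IsDyckPath m l) (j : ℕ) : 0 ≤ pathHeight l j :=
  (isDyckPath_iff.mp h).2.2 j

lemma append {m' : ℕ} {l' : List Bool} (h : IsDyckPath m l) (h' : IsDyckPath m' l') :
    IsDyckPath (m + m') (l ++ l') := by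
  refine isDyckPath_iff.mpr ⟨by simp [h.1, h'.1]; ring, ?_, fun j => ?_⟩
  · rw [pathHeight_append_of_length_le _ h.pathHeight_length (by simp)]
    simpa using h'.pathHeight_length
  · rw [pathHeight_append]
    exact add_nonneg (h.pathHeight_nonneg j) (h'.pathHeight_nonneg _)

lemma take {s : ℕ} (h : IsDyckPath m l) (hs : pathHeight l (2 * s) = 0)
    (hsl : 2 * s ≤ l.length) : IsDyckPath s (l.take (2 * s)) := by
  refine isDyckPath_iff.mpr ⟨by simp [hsl], ?_, fun j => ?_⟩ <;> rw [pathHeight_take]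
  · simpa [hsl] using hs
  · exact h.pathHeight_nonneg _

lemma drop {s : ℕ} (h : IsDyckPath m l) (hs : pathHeight l (2 * s) = 0)
    (hsl : 2 * s ≤ l.length) : IsDyckPath (m - s) (l.drop (2 * s)) := by
  refine isDyckPath_iff.mpr ⟨by simp [h.1]; omega, ?_, fun j => ?_⟩ <;>
    rw [pathHeight_drop hs hsl]
  · rw [List.length_drop, Nat.add_sub_cancel' hsl, h.pathHeight_length]
  · exact h.pathHeight_nonneg _

end IsDyckPath

def boolEquivDyckStep : Bool ≃ DyckStep where
  toFun b := bif b then .U else .D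
  invFun s := s == .U
  left_inv b := by cases b <;> rfl
  right_inv s := by cases s <;> rfl

section boolEquivDyckStep

variable (l : List Bool) (L : List DyckStep)

@[simp] lemma count_U_map_boolEquivDyckStep : (l.map boolEquivDyckStep).count .U = l.count true :=
  List.count_map_of_injective _ _ boolEquivDyckStep.injective true

@[simp] lemma count_D_map_boolEquivDyckStep : (l.map boolEquivDyckStep).count .D = l.count false :=
  List.count_map_of_injective _ _ boolEquivDyckStep.injective false

@[simp] lemma count_true_map_boolEquivDyckStep_symm :
    (L.map boolEquivDyckStep.symm).count true = L.count .U :=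
  List.count_map_of_injective _ _ boolEquivDyckStep.symm.injective .U

@[simp] lemma count_false_map_boolEquivDyckStep_symm :
    (L.map boolEquivDyckStep.symm).count false = L.count .D :=
  List.count_map_of_injective _ _ boolEquivDyckStep.symm.injective .D

end boolEquivDyckStep

def dyckPathEquiv (m : ℕ) : {l // IsDyckPath m l} ≃ {p : DyckWord // p.semilength = m} where
  toFun l :=
    ⟨⟨l.1.map boolEquivDyckStep, by simpa using l.2.2.1,
      fun i => by simpa [← List.map_take] using l.2.2.2 i⟩, by
      have := List.count_true_add_count_false l.1
      have := l.2.1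
      have := l.2.2.1
      simp only [DyckWord.semilength, count_U_map_boolEquivDyckStep]
      omega⟩
  invFun p :=
    ⟨p.1.toList.map boolEquivDyckStep.symm, by
      refine ⟨?_, by simpa using p.1.count_U_eq_count_D, fun i => ?_⟩
      · rw [List.length_map, ← p.1.two_mul_semilength_eq_length, p.2]
      · simpa [← List.map_take] using p.1.count_D_le_count_U i⟩
  left_inv l := by ext1; simp
  right_inv p := by ext1; ext1; simp

instance (m : ℕ) : Fintype {l // IsDyckPath m l} := Fintype.ofEquiv _ (dyckPathEquiv m).symm

noncomputable def dyckPaths (m : ℕ) : Finset (List Bool) :=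
  (univ : Finset {l // IsDyckPath m l}).map (.subtype _)

lemma mem_dyckPaths {m : ℕ} {l : List Bool} : l ∈ dyckPaths m ↔ IsDyckPath m l := by
  simp [dyckPaths]

lemma card_dyckPaths (m : ℕ) : #(dyckPaths m) = catalan m := by
  rw [dyckPaths, card_map, card_univ, Fintype.card_congr (dyckPathEquiv m),
    DyckWord.card_dyckWord_semilength_eq_catalan]

def IsPrimitivePath (l : List Bool) : Prop :=
  l ≠ [] ∧ ∀ j, 0 < j → j < l.length → pathHeight l j ≠ 0

open scoped Classical in
noncomputable def primitivePaths (m : ℕ) : Finset (List Bool) :=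
  (dyckPaths m).filter IsPrimitivePath

lemma mem_primitivePaths {m : ℕ} {l : List Bool} :
    l ∈ primitivePaths m ↔ IsDyckPath m l ∧ IsPrimitivePath l := by
  simp [primitivePaths, mem_dyckPaths]

def nestPath (l : List Bool) : List Bool := true :: (l ++ [false])

lemma nestPath_injective : Function.Injective nestPath := fun a b h => by
  simpa [nestPath] using h

lemma pathHeight_nestPath (l : List Bool) {j : ℕ} (hj : j ≤ l.length) :
    pathHeight (nestPath l) (j + 1) = 1 + pathHeight l j := by
  rw [nestPath, pathHeight_cons_succ, pathHeight_append_of_le_length _ hj, if_pos rfl]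

lemma pathHeight_nestPath_length (l : List Bool) :
    pathHeight (nestPath l) (nestPath l).length = pathHeight l l.length := by
  rw [nestPath, List.length_cons, pathHeight_cons_succ, pathHeight_append,
    pathHeight_of_length_le (by simp : l.length ≤ (l ++ [false]).length)]
  simp [pathHeight]

lemma pathHeight_append_singleton (l : List Bool) (c : Bool) :
    pathHeight (l ++ [c]) (l.length + 1) = pathHeight l l.length + if c then 1 else -1 := by
  rw [pathHeight_append, pathHeight_of_length_le (by omega), Nat.add_sub_cancel_left]
  cases c <;> simp [pathHeight]

lemma IsDyckPath.nestPath_mem_primitivePaths {m : ℕ} {l : List Bool} (h : IsDyckPath m l) :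
    nestPath l ∈ primitivePaths (m + 1) := by
  have hlen : (nestPath l).length = l.length + 2 := by simp [nestPath]
  have hend : pathHeight (nestPath l) (nestPath l).length = 0 := by
    rw [hlen, nestPath, pathHeight_cons_succ, pathHeight_append_singleton,
      h.pathHeight_length]
    simp
  have hpos : ∀ j, 0 < j → j < (nestPath l).length → 0 < pathHeight (nestPath l) j := by
    intro j hj hjl
    obtain ⟨i, rfl⟩ := Nat.exists_eq_add_one_of_ne_zero hj.ne'
    rw [pathHeight_nestPath _ (by omega)]
    linarith [h.pathHeight_nonneg i]
  refine mem_primitivePaths.mpr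
    ⟨isDyckPath_iff.mpr ⟨by rw [hlen, h.1]; ring, hend, fun j => ?_⟩, List.cons_ne_nil _ _,
      fun j hj hjl => (hpos j hj hjl).ne'⟩
  rcases Nat.eq_zero_or_pos j with rfl | hj
  · rw [pathHeight_zero]
  rcases lt_or_ge j (nestPath l).length with hjl | hjl
  · exact (hpos j hj hjl).le
  · rw [pathHeight_of_length_le hjl, hend]

lemma IsDyckPath.exists_eq_nestPath {m : ℕ} {l : List Bool} (h : IsDyckPath (m + 1) l)
    (hl : IsPrimitivePath l) : ∃ l', IsDyckPath m l' ∧ nestPath l' = l := by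
  have hpos : ∀ j, 0 < j → j < l.length → 1 ≤ pathHeight l j := fun j hj hjl => by
    have := h.pathHeight_nonneg j
    have := hl.2 j hj hjl
    omega
  obtain ⟨b, t, rfl⟩ := List.exists_cons_of_ne_nil hl.1
  have hb : b = true := by
    have h1 := hpos 1 one_pos (by rw [h.1]; omega)
    rw [pathHeight_cons_succ, pathHeight_zero] at h1
    cases b <;> simp_all
  obtain ⟨l', c, rfl⟩ : ∃ l' c, t = l' ++ [c] := by
    rcases List.eq_nil_or_concat' t with rfl | ht
    · have := h.1
      simp only [List.length_singleton] at this
      omega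
    · exact ht
  subst hb
  have hc : c = false := by
    have hend := h.pathHeight_length
    have hlast := hpos (l'.length + 1) (by omega) (by simp)
    rw [← List.cons_append, show ((true :: l') ++ [c]).length = (true :: l').length + 1 by simp,
      pathHeight_append_singleton] at hend
    rw [← List.cons_append, pathHeight_append_of_le_length _ (by simp),
      ← List.length_cons] at hlast
    cases c
    · rfl
    · simp only [if_true] at hend
      linarith
  subst hc
  have hend := h.pathHeight_length
  rw [← nestPath, pathHeight_nestPath_length] at hend
  refine ⟨l', isDyckPath_iff.mpr ⟨?_, hend, fun i => ?_⟩, rfl⟩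
  · have := h.1
    simp at this
    omega
  · rcases le_or_gt i l'.length with hi | hi
    · have := hpos (i + 1) (by omega) (by simp; omega)
      rw [← nestPath, pathHeight_nestPath _ hi] at this
      linarith
    · rw [pathHeight_of_length_le hi.le, hend]

lemma primitivePaths_succ (m : ℕ) :
    primitivePaths (m + 1) = (dyckPaths m).map ⟨nestPath, nestPath_injective⟩ := by
  ext l
  simp only [mem_primitivePaths, mem_map, mem_dyckPaths, Function.Embedding.coeFn_mk]
  constructor
  · exact fun ⟨h, hl⟩ => h.exists_eq_nestPath hl
  · rintro ⟨l', h, rfl⟩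
    exact mem_primitivePaths.mp h.nestPath_mem_primitivePaths

lemma card_primitivePaths_succ (m : ℕ) : #(primitivePaths (m + 1)) = catalan m := by
  rw [primitivePaths_succ, card_map, card_dyckPaths]

lemma exists_isPrimitivePath_drop {l : List Bool} (hl : l ≠ []) :
    ∃ r < l.length, pathHeight l r = 0 ∧ IsPrimitivePath (l.drop r) := by
  have hlen := List.length_pos_of_ne_nil hl
  let P j := pathHeight l j = 0
  have hr : P (Nat.findGreatest P (l.length - 1)) :=
    Nat.findGreatest_spec (Nat.zero_le _) (pathHeight_zero l)
  have hgt : ∀ k, Nat.findGreatest P (l.length - 1) < k → k < l.length → ¬P k :=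
    fun k hk hkl => Nat.findGreatest_is_greatest hk (by omega)
  have hrl : Nat.findGreatest P (l.length - 1) < l.length :=
    (Nat.findGreatest_le _).trans_lt (by omega)
  generalize Nat.findGreatest P (l.length - 1) = r at hr hgt hrl
  refine ⟨r, hrl, hr, by simpa [List.drop_eq_nil_iff] using hrl, fun j hj hjl => ?_⟩
  rw [pathHeight_drop hr hrl.le]
  exact hgt _ (by omega) (by simp at hjl; omega)

lemma length_eq_of_append_eq_append {a a' p p' : List Bool} (ha : pathHeight a a.length = 0)
    (ha' : pathHeight a' a'.length = 0) (hp : IsPrimitivePath p) (hp' : IsPrimitivePath p')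
    (h : a ++ p = a' ++ p') : a.length = a'.length := by
  wlog hle : a.length ≤ a'.length generalizing a a' p p'
  · exact (this ha' ha hp' hp h.symm (by omega)).symm
  by_contra hne
  have hlen := congrArg List.length h
  have hp'len := List.length_pos_of_ne_nil hp'.1
  simp only [List.length_append] at hlen
  apply hp.2 (a'.length - a.length) (by omega) (by omega)
  rw [← pathHeight_append_of_length_le p ha hle, h, pathHeight_append_of_le_length _ le_rfl, ha']

lemma append_injOn :
    Set.InjOn (fun q : List Bool × List Bool => q.1 ++ q.2)
      {q | pathHeight q.1 q.1.length = 0 ∧ IsPrimitivePath q.2} := by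
  rintro ⟨a, p⟩ ⟨ha, hp⟩ ⟨a', p'⟩ ⟨ha', hp'⟩ h
  obtain ⟨rfl, rfl⟩ := List.append_inj h (length_eq_of_append_eq_append ha ha' hp hp' h)
  rfl

open scoped Classical in
noncomputable def avoidingPaths (n : ℕ) : Finset (List Bool) :=
  (dyckPaths (2 * n + 1)).filter fun l => ∀ k ∈ Icc 1 n, pathHeight l (4 * k) ≠ 0

lemma mem_avoidingPaths {n : ℕ} {l : List Bool} :
    l ∈ avoidingPaths n ↔
      IsDyckPath (2 * n + 1) l ∧ ∀ k ∈ Icc 1 n, pathHeight l (4 * k) ≠ 0 := by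
  simp [avoidingPaths, mem_dyckPaths]

/-- A path of `avoidingPaths n` splits at its last return to the axis before the end into an empty
prefix or a prefix of length `4 * t + 2` from `avoidingPaths t`, followed by a primitive path. -/
noncomputable def avoidingSplits (n : ℕ) : Finset (List Bool × List Bool) :=
  ({[]} ×ˢ primitivePaths (2 * n + 1)) ∪
    (range n).biUnion fun t => avoidingPaths t ×ˢ primitivePaths (2 * (n - t))

lemma mem_avoidingSplits {n : ℕ} {q : List Bool × List Bool} :
    q ∈ avoidingSplits n ↔ q.1 = [] ∧ q.2 ∈ primitivePaths (2 * n + 1) ∨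
      ∃ t < n, q.1 ∈ avoidingPaths t ∧ q.2 ∈ primitivePaths (2 * (n - t)) := by
  simp only [avoidingSplits, mem_union, mem_product, mem_singleton, mem_biUnion, mem_range]

lemma length_of_mem_avoidingPaths {n : ℕ} {l : List Bool} (h : l ∈ avoidingPaths n) :
    l.length = 4 * n + 2 := by
  rw [(mem_avoidingPaths.mp h).1.1]
  ring

lemma append_mem_avoidingPaths {n : ℕ} {q : List Bool × List Bool}
    (hq : q ∈ avoidingSplits n) : q.1 ++ q.2 ∈ avoidingPaths n := by
  obtain ⟨a, p⟩ := q
  simp only [mem_avoidingSplits, mem_primitivePaths] at hq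
  rcases hq with ⟨rfl, hp, hprim⟩ | ⟨t, ht, ha, hp, hprim⟩
  · refine mem_avoidingPaths.mpr ⟨hp, fun k hk => hprim.2 _ ?_ ?_⟩ <;>
      simp [mem_Icc, hp.1] at hk ⊢ <;> omega
  · have hlen := length_of_mem_avoidingPaths ha
    rw [mem_avoidingPaths] at ha
    refine mem_avoidingPaths.mpr ⟨by convert ha.1.append hp using 1; omega, fun k hk => ?_⟩
    rw [mem_Icc] at hk
    rcases le_or_gt (4 * k) a.length with hk' | hk'
    · rw [pathHeight_append_of_le_length _ hk']
      exact ha.2 k (mem_Icc.mpr ⟨hk.1, by omega⟩)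
    · rw [pathHeight_append_of_length_le _ ha.1.pathHeight_length hk'.le]
      exact hprim.2 _ (by omega) (by rw [hp.1]; omega)

lemma exists_mem_avoidingSplits {n : ℕ} {l : List Bool} (hl : l ∈ avoidingPaths n) :
    ∃ q ∈ avoidingSplits n, q.1 ++ q.2 = l := by
  have hlen := length_of_mem_avoidingPaths hl
  rw [mem_avoidingPaths] at hl
  obtain ⟨hdyck, havoid⟩ := hl
  obtain ⟨r, hrl, hr, hprim⟩ :=
    exists_isPrimitivePath_drop (l := l) (by rintro rfl; simp at hlen)
  refine ⟨(l.take r, l.drop r), ?_, List.take_append_drop r l⟩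
  simp only [mem_avoidingSplits, mem_primitivePaths, List.take_eq_nil_iff]
  rcases Nat.eq_zero_or_pos r with rfl | hr0
  · exact Or.inl ⟨Or.inl rfl, hdyck, hprim⟩
  obtain ⟨s, rfl⟩ := even_of_pathHeight_eq_zero hr hrl.le
  have hs : s % 2 = 1 := by
    by_contra hs
    exact havoid (s / 2) (mem_Icc.mpr ⟨by omega, by omega⟩)
      (by rwa [show 4 * (s / 2) = s + s by omega])
  obtain ⟨t, rfl⟩ : ∃ t, s = 2 * t + 1 := ⟨s / 2, by omega⟩
  rw [← two_mul] at hr hrl hprim ⊢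
  refine Or.inr
    ⟨t, by omega, mem_avoidingPaths.mpr ⟨hdyck.take hr hrl.le, fun k hk => ?_⟩, ?_, hprim⟩
  · rw [mem_Icc] at hk
    rw [pathHeight_take, min_eq_left (by omega)]
    exact havoid k (mem_Icc.mpr ⟨hk.1, by omega⟩)
  · convert hdyck.drop hr hrl.le using 1
    omega

lemma card_avoidingSplits (n : ℕ) :
    #(avoidingSplits n) =
      catalan (2 * n) + ∑ t ∈ range n, #(avoidingPaths t) * catalan (2 * (n - t) - 1) := by
  rw [avoidingSplits, card_union_of_disjoint, card_biUnion, card_product, card_singleton, one_mul,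
    card_primitivePaths_succ]
  · refine congrArg _ (sum_congr rfl fun t ht => ?_)
    rw [card_product, ← card_primitivePaths_succ, Nat.sub_add_cancel]
    rw [mem_range] at ht
    omega
  · intro t _ t' _ htt'
    refine disjoint_left.mpr fun q hq hq' => htt' ?_
    rw [mem_product] at hq hq'
    have := (length_of_mem_avoidingPaths hq.1).symm.trans (length_of_mem_avoidingPaths hq'.1)
    omega
  · refine disjoint_left.mpr fun q hq hq' => ?_
    simp only [mem_product, mem_singleton, mem_biUnion] at hq hq'
    obtain ⟨t, -, hq'⟩ := hq'
    simpa [hq.1] using length_of_mem_avoidingPaths hq'.1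

lemma image_avoidingSplits (n : ℕ) :
    (avoidingSplits n).image (fun q => q.1 ++ q.2) = avoidingPaths n := by
  ext l
  simp only [mem_image]
  exact ⟨fun ⟨q, hq, hql⟩ => hql ▸ append_mem_avoidingPaths hq, exists_mem_avoidingSplits⟩

lemma card_avoidingPaths (n : ℕ) : #(avoidingPaths n) = #(avoidingSplits n) := by
  refine image_avoidingSplits n ▸ card_image_of_injOn (append_injOn.mono fun q hq => ?_)
  rcases mem_avoidingSplits.mp hq with ⟨hq₁, hq₂⟩ | ⟨t, -, hq₁, hq₂⟩
  · exact ⟨by simp [hq₁, pathHeight_zero], (mem_primitivePaths.mp hq₂).2⟩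
  · exact ⟨(mem_avoidingPaths.mp hq₁).1.pathHeight_length, (mem_primitivePaths.mp hq₂).2⟩

namespace PowerSeries

variable {R : Type*} [CommRing R]

noncomputable def evenPart (f : R⟦X⟧) : R⟦X⟧ := mk fun n => coeff (2 * n) f

noncomputable def oddPart (f : R⟦X⟧) : R⟦X⟧ := mk fun n => coeff (2 * n + 1) f

lemma coeff_two_mul_expand_add_X_mul_expand (f g : R⟦X⟧) (n : ℕ) :
    coeff (2 * n) (expand 2 two_ne_zero f + X * expand 2 two_ne_zero g) = coeff n f := by
  rcases n with _ | n
  · simp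
  · rw [map_add, coeff_expand_mul, show 2 * (n + 1) = (2 * n + 1) + 1 by ring,
      coeff_succ_X_mul, coeff_expand_of_not_dvd _ _ _ (by omega), add_zero]

lemma coeff_two_mul_add_one_expand_add_X_mul_expand (f g : R⟦X⟧) (n : ℕ) :
    coeff (2 * n + 1) (expand 2 two_ne_zero f + X * expand 2 two_ne_zero g) = coeff n g := by
  rw [map_add, coeff_succ_X_mul, coeff_expand_mul, coeff_expand_of_not_dvd _ _ _ (by omega),
    zero_add]

lemma expand_evenPart_add_X_mul_expand_oddPart (f : R⟦X⟧) :
    expand 2 two_ne_zero (evenPart f) + X * expand 2 two_ne_zero (oddPart f) = f := by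
  ext n
  obtain ⟨m, rfl | rfl⟩ := Nat.even_or_odd' n
  · simp [coeff_two_mul_expand_add_X_mul_expand, evenPart]
  · simp [coeff_two_mul_add_one_expand_add_X_mul_expand, oddPart]

lemma eq_of_expand_add_X_mul_expand_eq {f g f' g' : R⟦X⟧}
    (h : expand 2 two_ne_zero f + X * expand 2 two_ne_zero g =
      expand 2 two_ne_zero f' + X * expand 2 two_ne_zero g') : f = f' ∧ g = g' := by
  constructor <;> ext n
  · simpa [coeff_two_mul_expand_add_X_mul_expand] using congrArg (coeff (2 * n)) h
  · simpa [coeff_two_mul_add_one_expand_add_X_mul_expand] using congrArg (coeff (2 * n + 1)) h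

lemma one_sub_X_mul_ne_zero [Nontrivial R] (f : R⟦X⟧) : 1 - X * f ≠ 0 := fun h => by
  simpa using congrArg constantCoeff h

lemma evenPart_oddPart_of_eq_one_add_X_mul_sq {F : R⟦X⟧} (hF : F = 1 + X * F ^ 2) :
    evenPart F = 1 + 2 * X * evenPart F * oddPart F ∧
      oddPart F = evenPart F ^ 2 + X * oddPart F ^ 2 := by
  apply eq_of_expand_add_X_mul_expand_eq
  have h := expand_evenPart_add_X_mul_expand_oddPart F
  rw [← h] at hF
  simp only [map_add, map_mul, map_one, map_pow, map_ofNat, expand_X]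
  linear_combination hF

lemma eq_of_eq_one_add_X_mul_mul_sq [IsDomain R] {b F G : R⟦X⟧} (hF : F = 1 + X * b * F ^ 2)
    (hG : G = 1 + X * b * G ^ 2) : F = G := by
  have h : (F - G) * (1 - X * (b * (F + G))) = 0 := by linear_combination hF - hG
  exact sub_eq_zero.mp ((mul_eq_zero.mp h).resolve_right (one_sub_X_mul_ne_zero _))

lemma coeff_X_mul_mul (f g : R⟦X⟧) (n : ℕ) :
    coeff n (X * (f * g)) = ∑ k ∈ range n, coeff k f * coeff (n - 1 - k) g := by
  rcases n with _ | n
  · simp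
  · rw [coeff_succ_X_mul, coeff_mul, Nat.sum_antidiagonal_eq_sum_range_succ_mk]
    rfl

end PowerSeries

noncomputable def catalanSeriesInt : ℤ⟦X⟧ := map (Nat.castRingHom ℤ) catalanSeries

lemma catalanSeriesInt_eq : catalanSeriesInt = 1 + X * catalanSeriesInt ^ 2 := by
  have h := congrArg (map (Nat.castRingHom ℤ)) catalanSeries_sq_mul_X_add_one
  simp only [map_add, map_mul, map_pow, map_X, map_one] at h
  rw [catalanSeriesInt]
  linear_combination -h

lemma coeff_catalanSeriesInt (n : ℕ) : coeff n catalanSeriesInt = catalan n := by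
  simp [catalanSeriesInt]

lemma coeff_rescale_four_catalanSeriesInt (n : ℕ) :
    coeff n (rescale 4 catalanSeriesInt) = 4 ^ n * catalan n := by
  simp [coeff_rescale, coeff_catalanSeriesInt]

lemma rescale_four_catalanSeriesInt_eq :
    rescale 4 catalanSeriesInt = 1 + X * 4 * rescale 4 catalanSeriesInt ^ 2 := by
  conv_lhs => rw [catalanSeriesInt_eq]
  rw [map_add, map_mul, map_one, map_pow, rescale_X, map_ofNat]
  ring

lemma evenPart_catalanSeriesInt_sq :
    evenPart catalanSeriesInt ^ 2 = rescale 4 catalanSeriesInt := by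
  obtain ⟨hE, hO⟩ := evenPart_oddPart_of_eq_one_add_X_mul_sq catalanSeriesInt_eq
  set E := evenPart catalanSeriesInt
  set O := oddPart catalanSeriesInt
  refine eq_of_eq_one_add_X_mul_mul_sq ?_ rescale_four_catalanSeriesInt_eq
  -- `E (1 - 2XO) = 1` gives `E² - 1 = E² (1 - (1 - 2XO)²) = 4X E² (O - XO²) = 4X E⁴`.
  linear_combination (E * (1 - 2 * X * O) + 1) * hE + 4 * X * E ^ 2 * hO

theorem eq_of_catalan_recurrence (s : ℕ → ℤ)
    (hs : ∀ n, s n = catalan (2 * n) + ∑ t ∈ range n, s t * catalan (2 * (n - t) - 1))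
    (n : ℕ) :
    s n = 2 ^ (2 * n + 1) * catalan n - catalan (2 * n + 1) := by
  obtain ⟨hE, hO⟩ := evenPart_oddPart_of_eq_one_add_X_mul_sq catalanSeriesInt_eq
  have hsq := evenPart_catalanSeriesInt_sq
  set E := evenPart catalanSeriesInt
  set O := oddPart catalanSeriesInt
  have hS : PowerSeries.mk s = E + X * (PowerSeries.mk s * O) := by
    ext m
    rw [map_add, coeff_X_mul_mul, coeff_mk, hs m]
    simp only [E, O, evenPart, oddPart, coeff_mk, coeff_catalanSeriesInt]
    congr 1
    refine sum_congr rfl fun t ht => ?_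
    rw [mem_range] at ht
    congr 3
    omega
  have hA : (2 * E ^ 2 - O) * (1 - X * O) = E := by linear_combination E * hE - hO
  have h : PowerSeries.mk s = 2 * E ^ 2 - O :=
    mul_right_cancel₀ (one_sub_X_mul_ne_zero O) (by linear_combination hS - hA)
  have hn := congrArg (coeff n) h
  rw [coeff_mk, map_sub, two_mul, map_add, hsq, coeff_rescale_four_catalanSeriesInt] at hn
  simp only [O, oddPart, coeff_mk, coeff_catalanSeriesInt] at hn
  rw [hn, pow_succ, pow_mul]
  ring

theorem dyck_paths_avoiding_4k_odd (n : ℕ) :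
    ({l : List Bool | IsDyckPath (2 * n + 1) l ∧
        ∀ k ∈ Finset.Icc 1 n, pathHeight l (4 * k) ≠ 0}.ncard : ℤ) =
      2 ^ (2 * n + 1) * catalan n - catalan (2 * n + 1) := by
  have hset : {l : List Bool | IsDyckPath (2 * n + 1) l ∧
      ∀ k ∈ Finset.Icc 1 n, pathHeight l (4 * k) ≠ 0} = avoidingPaths n :=
    Set.ext fun l => mem_avoidingPaths.symm
  rw [hset, Set.ncard_coe_finset]
  refine eq_of_catalan_recurrence (fun n => #(avoidingPaths n)) (fun n => ?_) n
  rw [card_avoidingPaths, card_avoidingSplits]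
  push_cast
  rfl
end
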